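/- Let g(λ) = r_S(λ, 0) and fₙ(λ) = (n^α/n)·r_S(λ, β) + ((n − n^α)/n)·r_S(λ, 0), where r_S(λ, b) is the risk of soft thresholding at a Gaussian mean b. If for each n, λ̂ₙ is a minimizer of fₙ, then λ̂ₙ → ∞ as n → ∞. -/

import Mathlib

open MeasureTheory ProbabilityTheory Filter

/-- Soft thresholding operator. -/
noncomputable def softThresh (y lam : ℝ) : ℝ := Real.sign y * max (|y| - lam) 0

/-- Risk of soft thresholding at a Gaussian mean `b` with noise level `σ`:
`r_S(λ, b) = E[(S(Y, λ) − b)²]` for `Y ~ N(b, σ²)`. -/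
noncomputable def softRisk (σ lam b : ℝ) : ℝ :=
  ∫ y, (softThresh y lam - b)^2 ∂(gaussianReal b ⟨σ^2, sq_nonneg σ⟩)

/-!
Weighting the risks by `aₙ = n^α/n → 0` and `bₙ = 1 - aₙ → 1`, the objective `fₙ` converges to the
null risk `g = r_S(·, 0)`, which is positive, decreasing and tends to `0`. If `λ̂ₙ ≤ M` infinitely
often, then `fₙ(λ̂ₙ) ≥ bₙ g(λ̂ₙ) ≥ bₙ g(M)`, whereas a fixed `λ*` with `g(λ*) < g(M)` gives
`fₙ(λ*) → g(λ*) < g(M)`, contradicting minimality for large `n`.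
-/

open Set
open scoped NNReal Topology

theorem tendsto_atTop_of_isMinOn_add_vanishing {ι : Type*} {l : Filter ι} {g h : ℝ → ℝ}
    {a b : ι → ℝ} {x : ι → ℝ} (hg_pos : ∀ t, 0 ≤ t → 0 < g t) (hg_anti : AntitoneOn g (Ici 0))
    (hg_lim : Tendsto g atTop (𝓝 0)) (hh : ∀ t, 0 ≤ h t) (ha_nonneg : ∀ i, 0 ≤ a i)
    (ha : Tendsto a l (𝓝 0)) (hb : Tendsto b l (𝓝 1)) (hx : ∀ i, x i ∈ Ici 0)
    (hmin : ∀ i, IsMinOn (fun t => a i * h t + b i * g t) (Ici 0) (x i)) :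
    Tendsto x l atTop := by
  refine tendsto_atTop.2 fun M => ?_
  set M' := max M 0
  have hM' : 0 ≤ M' := le_max_right _ _
  have hgM : 0 < g M' := hg_pos M' hM'
  obtain ⟨t, hgt, ht⟩ := ((hg_lim.eventually_lt_const hgM).and (eventually_ge_atTop 0)).exists
  have hlim : Tendsto (fun i => a i * h t + b i * g t - b i * g M') l (𝓝 (g t - g M')) := by
    simpa using ((ha.mul_const (h t)).add (hb.mul_const (g t))).sub (hb.mul_const (g M'))
  filter_upwards [hlim.eventually_lt_const (sub_neg.2 hgt), hb.eventually_const_le zero_lt_one]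
    with i hi hbi
  by_contra! hxM
  have hgx : g M' ≤ g (x i) := hg_anti (hx i) hM' (hxM.le.trans (le_max_left _ _))
  have hopt : a i * h (x i) + b i * g (x i) ≤ a i * h t + b i * g t := hmin i ht
  nlinarith [mul_nonneg (ha_nonneg i) (hh (x i)), mul_le_mul_of_nonneg_left hgx hbi]

lemma Real.measurable_sign : Measurable Real.sign :=
  Measurable.ite measurableSet_Iio measurable_const
    (Measurable.ite measurableSet_Ioi measurable_const measurable_const)

lemma measurable_softThresh (lam : ℝ) : Measurable fun y => softThresh y lam :=
  Real.measurable_sign.mul ((measurable_abs.sub measurable_const).max measurable_const)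

lemma softThresh_zero_right (y : ℝ) : softThresh y 0 = y := by
  rcases lt_trichotomy y 0 with hy | rfl | hy
  · simp [softThresh, Real.sign_of_neg hy, abs_of_neg hy, hy.le]
  · simp [softThresh]
  · simp [softThresh, Real.sign_of_pos hy, abs_of_pos hy, hy.le]

lemma antitone_sq_softThresh (y : ℝ) : Antitone fun lam => softThresh y lam ^ 2 := by
  intro l₁ l₂ hl
  simp only [softThresh, mul_pow]
  gcongr

lemma sq_softThresh_le_sq {lam : ℝ} (hlam : 0 ≤ lam) (y : ℝ) : softThresh y lam ^ 2 ≤ y ^ 2 := by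
  simpa [softThresh_zero_right] using antitone_sq_softThresh y hlam

lemma integrable_sq_softThresh_gaussianReal {lam : ℝ} (hlam : 0 ≤ lam) (v : ℝ≥0) :
    Integrable (fun y => softThresh y lam ^ 2) (gaussianReal 0 v) :=
  (memLp_id_gaussianReal 2).integrable_sq.mono'
    ((measurable_softThresh lam).pow_const 2).aestronglyMeasurable
    (Eventually.of_forall fun y => by
      rw [Real.norm_eq_abs, abs_of_nonneg (sq_nonneg _)]
      exact sq_softThresh_le_sq hlam y)

lemma antitoneOn_integral_sq_softThresh (v : ℝ≥0) :
    AntitoneOn (fun lam => ∫ y, softThresh y lam ^ 2 ∂gaussianReal 0 v) (Ici 0) :=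
  fun _ hl₁ _ _ hl => integral_mono (integrable_sq_softThresh_gaussianReal (hl₁.trans hl) v)
    (integrable_sq_softThresh_gaussianReal hl₁ v) fun y => antitone_sq_softThresh y hl

lemma integral_sq_softThresh_pos {v : ℝ≥0} (hv : v ≠ 0) {lam : ℝ} (hlam : 0 ≤ lam) :
    0 < ∫ y, softThresh y lam ^ 2 ∂gaussianReal 0 v := by
  rw [integral_pos_iff_support_of_nonneg (fun _ => sq_nonneg _)
    (integrable_sq_softThresh_gaussianReal hlam v)]
  have hsupp : Ioi lam ⊆ Function.support fun y => softThresh y lam ^ 2 := by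
    intro y (hy : lam < y)
    have hy0 : 0 < y := hlam.trans_lt hy
    simp [softThresh, Real.sign_of_pos hy0, abs_of_pos hy0, max_eq_left (sub_nonneg.2 hy.le),
      sub_ne_zero.2 hy.ne']
  refine (pos_iff_ne_zero.2 fun h => ?_).trans_le (measure_mono hsupp)
  simpa using gaussianReal_absolutelyContinuous' 0 hv h

lemma tendsto_integral_sq_softThresh_atTop (v : ℝ≥0) :
    Tendsto (fun lam => ∫ y, softThresh y lam ^ 2 ∂gaussianReal 0 v) atTop (𝓝 0) := by
  have h := tendsto_integral_filter_of_dominated_convergence (μ := gaussianReal 0 v) (l := atTop)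
    (F := fun lam y => softThresh y lam ^ 2) (f := fun _ => 0) (fun y => y ^ 2)
    (Eventually.of_forall fun lam => ((measurable_softThresh lam).pow_const 2).aestronglyMeasurable)
    ?_ (memLp_id_gaussianReal 2).integrable_sq (Eventually.of_forall fun y => ?_)
  · simpa using h
  · filter_upwards [eventually_ge_atTop 0] with lam hlam
    refine Eventually.of_forall fun y => ?_
    rw [Real.norm_eq_abs, abs_of_nonneg (sq_nonneg _)]
    exact sq_softThresh_le_sq hlam y
  · refine tendsto_const_nhds.congr' ?_
    filter_upwards [eventually_ge_atTop |y|] with lam hlam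
    simp [softThresh, max_eq_right (sub_nonpos.2 hlam)]

lemma softRisk_zero_eq (σ lam : ℝ) :
    softRisk σ lam 0 = ∫ y, softThresh y lam ^ 2 ∂gaussianReal 0 ⟨σ ^ 2, sq_nonneg σ⟩ := by
  simp only [softRisk, sub_zero]

lemma softRisk_nonneg (σ lam b : ℝ) : 0 ≤ softRisk σ lam b :=
  integral_nonneg fun _ => sq_nonneg _

lemma tendsto_rpow_div_self_atTop {α : ℝ} (hα : α < 1) :
    Tendsto (fun n : ℕ => (n : ℝ) ^ α / n) atTop (𝓝 0) := by
  have h := (tendsto_rpow_neg_atTop (sub_pos.2 hα)).comp tendsto_natCast_atTop_atTop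
  refine h.congr' ?_
  filter_upwards [eventually_ne_atTop 0] with n hn
  rw [Function.comp_apply, neg_sub, Real.rpow_sub (by positivity), Real.rpow_one]

theorem certainty_equivalent_sequence_tendsto_atTop_general
    (β σ α : ℝ) (hσ : 0 < σ) (hα1 : α < 1)
    (lamhat : ℕ → ℝ) (hmem : ∀ n, lamhat n ∈ Set.Ici (0 : ℝ))
    (hmin : ∀ n : ℕ, IsMinOn
      (fun lam => ((n : ℝ)^α / n) * softRisk σ lam β
        + (((n : ℝ) - (n : ℝ)^α) / n) * softRisk σ lam 0)
      (Set.Ici (0 : ℝ)) (lamhat n)) :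
    Tendsto lamhat atTop atTop := by
  have ha := tendsto_rpow_div_self_atTop hα1
  have hb : Tendsto (fun n : ℕ => ((n : ℝ) - (n : ℝ) ^ α) / n) atTop (𝓝 1) := by
    have h : Tendsto (fun n : ℕ => 1 - (n : ℝ) ^ α / n) atTop (𝓝 1) := by
      simpa using tendsto_const_nhds.sub ha
    refine h.congr' ?_
    filter_upwards [eventually_ne_atTop 0] with n hn
    rw [sub_div, div_self (Nat.cast_ne_zero.2 hn)]
  have hv : (⟨σ ^ 2, sq_nonneg σ⟩ : ℝ≥0) ≠ 0 := by
    simpa [← NNReal.coe_ne_zero] using hσ.ne'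
  simp only [softRisk_zero_eq] at hmin
  exact tendsto_atTop_of_isMinOn_add_vanishing (fun _ => integral_sq_softThresh_pos hv)
    (antitoneOn_integral_sq_softThresh _) (tendsto_integral_sq_softThresh_atTop _)
    (softRisk_nonneg σ · β) (fun n => by positivity) ha hb hmem hmin

/-- The certainty-equivalent regularisation sequence tends to infinity: if `λ̂ₙ`
minimizes `fₙ(λ) = (n^α/n) r_S(λ, β) + ((n − n^α)/n) r_S(λ, 0)` over `λ ≥ 0`,
then `λ̂ₙ → ∞`. -/
theorem certainty_equivalent_sequence_tendsto_atTop
    (β σ α : ℝ) (hσ : 0 < σ) (hα0 : 0 ≤ α) (hα1 : α < 1)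
    (lamhat : ℕ → ℝ) (hmem : ∀ n, lamhat n ∈ Set.Ici (0 : ℝ))
    (hmin : ∀ n : ℕ, IsMinOn
      (fun lam => ((n : ℝ)^α / n) * softRisk σ lam β
        + (((n : ℝ) - (n : ℝ)^α) / n) * softRisk σ lam 0)
      (Set.Ici (0 : ℝ)) (lamhat n)) :
    Tendsto lamhat atTop atTop :=
  certainty_equivalent_sequence_tendsto_atTop_general β σ α hσ hα1 lamhat hmem hmin
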